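/- For every 1 < q ≤ 2 and every integer n ≥ 1, the modulus of convexity of the space ℓ_q^n satisfies δ(t) ≥ ((q-1)/8)·t² for all t ∈ [0,2]. -/

import Mathlib

/-- The `ℓ_q` norm on `ℝⁿ`. -/
noncomputable def lqNorm (q : ℝ) {n : ℕ} (x : Fin n → ℝ) : ℝ :=
  (∑ i, |x i| ^ q) ^ (1 / q)

/-- The modulus of convexity of `ℓ_qⁿ`. -/
noncomputable def lqModulusOfConvexity (q : ℝ) (n : ℕ) (t : ℝ) : ℝ :=
  sInf {d : ℝ | ∃ x y : Fin n → ℝ, lqNorm q x ≤ 1 ∧ lqNorm q y ≤ 1 ∧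
    t ≤ lqNorm q (x - y) ∧ d = 1 - lqNorm q ((1 / 2 : ℝ) • (x + y))}

/-!
The bound comes from the Ball–Carlen–Lieb inequality
`‖u‖² + (q - 1)‖v‖² ≤ (‖u + v‖² + ‖u - v‖²) / 2` in `ℓ_q`, `1 ≤ q ≤ 2`.
Its one-dimensional case `(x² + (q - 1)y²)^(q/2) ≤ (|x + y|^q + |x - y|^q) / 2` reduces,
by symmetry and homogeneity, to `(1 + (q - 1)t²)^(q/2) ≤ ((1 + t)^q + (1 - t)^q) / 2` on
`[0, 1]`: Bernoulli's inequality followed by two derivative comparisons. Summing over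
coordinates needs the reverse Minkowski inequality in `ℓ_{q/2}` (concavity of `s ↦ s^(q/2)`)
and the convexity of `s ↦ s^(2/q)`. With `u = (x + y)/2`, `v = (x - y)/2`, `‖x‖, ‖y‖ ≤ 1`
and `‖x - y‖ ≥ t` it gives `N² ≤ 1 - (q - 1)t²/4` for `N = ‖(x + y)/2‖`, and
`1 - N ≥ (1 - N²)/2`.
-/

open Real Set

lemma two_le_one_add_rpow_add_one_sub_rpow {p t : ℝ} (hp : p ≤ 0) (ht₀ : -1 < t)
    (ht₁ : t < 1) :
    2 ≤ (1 + t) ^ p + (1 - t) ^ p := by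
  have ha : 0 < (1 + t) ^ p := rpow_pos_of_pos (by linarith) p
  have hb : 0 < (1 - t) ^ p := rpow_pos_of_pos (by linarith) p
  have hab : 1 ≤ (1 + t) ^ p * (1 - t) ^ p := by
    rw [← mul_rpow (by linarith) (by linarith)]
    exact one_le_rpow_of_pos_of_le_one_of_nonpos (by nlinarith) (by nlinarith [sq_nonneg t]) hp
  nlinarith [sq_nonneg ((1 + t) ^ p - (1 - t) ^ p)]

lemma two_mul_mul_le_one_add_rpow_sub_one_sub_rpow {c : ℝ} (hc₀ : 0 ≤ c) (hc₁ : c ≤ 1) :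
    ∀ t ∈ Icc (0 : ℝ) 1, 2 * c * t ≤ (1 + t) ^ c - (1 - t) ^ c := by
  refine image_le_of_deriv_right_le_deriv_boundary (f' := fun _ => 2 * c)
    (B' := fun t => c * (1 + t) ^ (c - 1) + c * (1 - t) ^ (c - 1))
    (by fun_prop) ?_ (by simp) ?_ ?_ ?_
  · intro t _
    simpa using ((hasDerivAt_id t).const_mul (2 * c)).hasDerivWithinAt
  · exact ((continuousOn_const.add continuousOn_id).rpow_const fun _ _ => Or.inr hc₀).sub
      ((continuousOn_const.sub continuousOn_id).rpow_const fun _ _ => Or.inr hc₀)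
  · rintro t ⟨ht₀, ht₁⟩
    have hadd : HasDerivAt (fun t : ℝ => (1 + t) ^ c) (1 * c * (1 + t) ^ (c - 1)) t :=
      ((hasDerivAt_id' t).const_add 1).rpow_const (Or.inl (by linarith))
    have hsub : HasDerivAt (fun t : ℝ => (1 - t) ^ c) (-1 * c * (1 - t) ^ (c - 1)) t :=
      ((hasDerivAt_id' t).const_sub 1).rpow_const (Or.inl (by linarith))
    exact ((hadd.sub hsub).congr_deriv (by ring)).hasDerivWithinAt
  · rintro t ⟨ht₀, ht₁⟩
    have := two_le_one_add_rpow_add_one_sub_rpow (p := c - 1) (by linarith) (by linarith) ht₁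
    nlinarith

lemma two_add_mul_sq_le_one_add_rpow_add_one_sub_rpow {q : ℝ} (hq₁ : 1 ≤ q)
    (hq₂ : q ≤ 2) :
    ∀ t ∈ Icc (0 : ℝ) 1, 2 + q * (q - 1) * t ^ 2 ≤ (1 + t) ^ q + (1 - t) ^ q := by
  refine image_le_of_deriv_right_le_deriv_boundary (f' := fun t => q * (q - 1) * (2 * t))
    (B' := fun t => q * (1 + t) ^ (q - 1) - q * (1 - t) ^ (q - 1))
    (by fun_prop) ?_ (by norm_num) ?_ ?_ ?_
  · intro t _
    exact (((hasDerivAt_pow 2 t).const_mul (q * (q - 1))).const_add 2).hasDerivWithinAt.congr_deriv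
      (by simp)
  · exact ((continuousOn_const.add continuousOn_id).rpow_const fun _ _ => Or.inr (by linarith)).add
      ((continuousOn_const.sub continuousOn_id).rpow_const fun _ _ => Or.inr (by linarith))
  · rintro t ⟨ht₀, ht₁⟩
    have hadd : HasDerivAt (fun t : ℝ => (1 + t) ^ q) (1 * q * (1 + t) ^ (q - 1)) t :=
      ((hasDerivAt_id' t).const_add 1).rpow_const (Or.inl (by linarith))
    have hsub : HasDerivAt (fun t : ℝ => (1 - t) ^ q) (-1 * q * (1 - t) ^ (q - 1)) t :=
      ((hasDerivAt_id' t).const_sub 1).rpow_const (Or.inl (by linarith))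
    exact ((hadd.add hsub).congr_deriv (by ring)).hasDerivWithinAt
  · rintro t ⟨ht₀, ht₁⟩
    have := two_mul_mul_le_one_add_rpow_sub_one_sub_rpow (c := q - 1) (by linarith) (by linarith)
      t ⟨ht₀, ht₁.le⟩
    nlinarith

lemma one_add_mul_sq_rpow_le {q t : ℝ} (hq₁ : 1 ≤ q) (hq₂ : q ≤ 2) (ht : t ∈ Icc 0 1) :
    (1 + (q - 1) * t ^ 2) ^ (q / 2) ≤ ((1 + t) ^ q + (1 - t) ^ q) / 2 := by
  have hbern := rpow_one_add_le_one_add_mul_self (s := (q - 1) * t ^ 2) (by nlinarith)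
    (p := q / 2) (by linarith) (by linarith)
  have := two_add_mul_sq_le_one_add_rpow_add_one_sub_rpow hq₁ hq₂ t ht
  linarith

lemma sq_add_mul_sq_rpow_le_of_le {q u v : ℝ} (hq₁ : 1 ≤ q) (hq₂ : q ≤ 2) (hv : 0 ≤ v)
    (hvu : v ≤ u) :
    (u ^ 2 + (q - 1) * v ^ 2) ^ (q / 2) ≤ ((u + v) ^ q + (u - v) ^ q) / 2 := by
  obtain rfl | hu := (hv.trans hvu).eq_or_lt
  · obtain rfl : v = 0 := le_antisymm hvu hv
    simp [zero_rpow (by linarith : q ≠ 0), zero_rpow (by linarith : q / 2 ≠ 0)]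
  obtain ⟨t, ⟨ht₀, ht₁⟩, rfl⟩ : ∃ t ∈ Icc (0 : ℝ) 1, v = u * t :=
    ⟨v / u, ⟨div_nonneg hv hu.le, (div_le_one hu).2 hvu⟩, by field_simp⟩
  have hsq : (u ^ 2) ^ (q / 2) = u ^ q := by
    rw [← rpow_natCast, ← rpow_mul hu.le]; ring_nf
  calc (u ^ 2 + (q - 1) * (u * t) ^ 2) ^ (q / 2)
      = u ^ q * (1 + (q - 1) * t ^ 2) ^ (q / 2) := by
        rw [← hsq, ← mul_rpow (by positivity) (by nlinarith)]; ring_nf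
    _ ≤ u ^ q * (((1 + t) ^ q + (1 - t) ^ q) / 2) := by
        gcongr; exact one_add_mul_sq_rpow_le hq₁ hq₂ ⟨ht₀, ht₁⟩
    _ = ((u + u * t) ^ q + (u - u * t) ^ q) / 2 := by
        rw [show u + u * t = u * (1 + t) by ring, show u - u * t = u * (1 - t) by ring,
          mul_rpow hu.le (by linarith), mul_rpow hu.le (by linarith)]
        ring

lemma sq_add_mul_sq_rpow_le {q : ℝ} (hq₁ : 1 ≤ q) (hq₂ : q ≤ 2) (x y : ℝ) :
    (x ^ 2 + (q - 1) * y ^ 2) ^ (q / 2) ≤ (|x + y| ^ q + |x - y| ^ q) / 2 := by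
  wlog hyx : |y| ≤ |x| generalizing x y
  · have hsq : x ^ 2 ≤ y ^ 2 := sq_le_sq.2 (le_of_not_ge hyx)
    calc (x ^ 2 + (q - 1) * y ^ 2) ^ (q / 2) ≤ (y ^ 2 + (q - 1) * x ^ 2) ^ (q / 2) := by
          gcongr ?_ ^ _
          nlinarith
      _ ≤ (|y + x| ^ q + |y - x| ^ q) / 2 := this y x (le_of_not_ge hyx)
      _ = (|x + y| ^ q + |x - y| ^ q) / 2 := by rw [add_comm y x, abs_sub_comm]
  wlog hx : 0 ≤ x generalizing x y
  · have := this (-x) (-y) (by simpa using hyx) (by linarith)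
    rwa [neg_sq, neg_sq, ← neg_add, ← neg_sub', abs_neg, abs_neg] at this
  wlog hy : 0 ≤ y generalizing y
  · have := this (-y) (by simpa using hyx) (by linarith)
    rwa [neg_sq, ← sub_eq_add_neg, sub_neg_eq_add, add_comm (|x - y| ^ q)] at this
  rw [abs_of_nonneg hx, abs_of_nonneg hy] at hyx
  rw [abs_of_nonneg (by linarith), abs_of_nonneg (by linarith)]
  exact sq_add_mul_sq_rpow_le_of_le hq₁ hq₂ hy hyx

lemma add_div_two_rpow_le {p a b : ℝ} (hp : 1 ≤ p) (ha : 0 ≤ a) (hb : 0 ≤ b) :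
    ((a + b) / 2) ^ p ≤ (a ^ p + b ^ p) / 2 := by
  have h := (convexOn_rpow hp).2 (mem_Ici.2 ha) (mem_Ici.2 hb)
    (by norm_num : (0 : ℝ) ≤ 1 / 2) (by norm_num : (0 : ℝ) ≤ 1 / 2) (by norm_num)
  simp only [smul_eq_mul] at h
  rw [show (a + b) / 2 = 1 / 2 * a + 1 / 2 * b by ring,
    show (a ^ p + b ^ p) / 2 = 1 / 2 * a ^ p + 1 / 2 * b ^ p by ring]
  exact h

section LqNorm

variable {n : ℕ} {q : ℝ}

lemma lqNorm_nonneg (x : Fin n → ℝ) : 0 ≤ lqNorm q x := by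
  unfold lqNorm; positivity

lemma lqNorm_rpow (hq : q ≠ 0) (x : Fin n → ℝ) : lqNorm q x ^ q = ∑ i, |x i| ^ q := by
  rw [lqNorm, one_div, rpow_inv_rpow (by positivity) hq]

lemma lqNorm_smul (hq : q ≠ 0) (c : ℝ) (x : Fin n → ℝ) :
    lqNorm q (c • x) = |c| * lqNorm q x := by
  simp only [lqNorm, Pi.smul_apply, smul_eq_mul, abs_mul,
    mul_rpow (abs_nonneg c) (abs_nonneg _), ← Finset.mul_sum]
  rw [mul_rpow (by positivity) (by positivity), one_div, rpow_rpow_inv (abs_nonneg c) hq]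

lemma lqNorm_neg (x : Fin n → ℝ) : lqNorm q (-x) = lqNorm q x := by
  simp [lqNorm]

lemma lqNorm_mono (hq : 0 ≤ q) {x y : Fin n → ℝ} (hx : 0 ≤ x) (hxy : x ≤ y) :
    lqNorm q x ≤ lqNorm q y := by
  unfold lqNorm
  gcongr with i
  · exact hx i
  · exact hxy i

lemma lqNorm_sq (x : Fin n → ℝ) : lqNorm q x ^ 2 = (∑ i, |x i| ^ q) ^ (2 / q) := by
  rw [lqNorm, ← rpow_mul_natCast (by positivity)]
  ring_nf

lemma lqNorm_sq_eq_lqNorm_div_two (x : Fin n → ℝ) :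
    lqNorm q x ^ 2 = lqNorm (q / 2) (fun i => x i ^ 2) := by
  have h : ∀ i, |x i ^ 2| ^ (q / 2) = |x i| ^ q := fun i => by
    rw [abs_pow, ← rpow_natCast, ← rpow_mul (abs_nonneg _)]; ring_nf
  rw [lqNorm_sq, lqNorm]
  simp only [h, one_div_div]

lemma lqNorm_pi_single (hq : q ≠ 0) (i : Fin n) : lqNorm q (Pi.single i 1) = 1 := by
  have h : (fun j => |(Pi.single i (1 : ℝ) : Fin n → ℝ) j| ^ q) = Pi.single i 1 := by
    ext j
    rcases eq_or_ne j i with rfl | hj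
    · simp
    · simp [hj, zero_rpow hq]
  simp only [lqNorm, h, Finset.sum_pi_single', Finset.mem_univ, if_true, one_rpow]

lemma one_le_lqNorm_smul_add_smul {r : ℝ} (hr0 : 0 < r) (hr1 : r ≤ 1) {x y : Fin n → ℝ}
    (hx : 0 ≤ x) (hy : 0 ≤ y) (hx1 : lqNorm r x = 1) (hy1 : lqNorm r y = 1) {a b : ℝ}
    (ha : 0 ≤ a) (hb : 0 ≤ b) (hab : a + b = 1) : 1 ≤ lqNorm r (a • x + b • y) := by
  rw [← rpow_le_rpow_iff zero_le_one (lqNorm_nonneg _) hr0, one_rpow, lqNorm_rpow hr0.ne']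
  calc (1 : ℝ) = a * ∑ i, |x i| ^ r + b * ∑ i, |y i| ^ r := by
        rw [← lqNorm_rpow hr0.ne', ← lqNorm_rpow hr0.ne', hx1, hy1, one_rpow, mul_one,
          mul_one, hab]
    _ ≤ ∑ i, |(a • x + b • y) i| ^ r := by
        rw [Finset.mul_sum, Finset.mul_sum, ← Finset.sum_add_distrib]
        gcongr with i
        have hxy : 0 ≤ (a • x + b • y) i :=
          add_nonneg (smul_nonneg ha hx i) (smul_nonneg hb hy i)
        rw [abs_of_nonneg (hx i), abs_of_nonneg (hy i), abs_of_nonneg hxy]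
        exact (concaveOn_rpow hr0.le hr1).2 (hx i) (hy i) ha hb hab

theorem add_lqNorm_le_lqNorm_add {r : ℝ} (hr0 : 0 < r) (hr1 : r ≤ 1) {x y : Fin n → ℝ}
    (hx : 0 ≤ x) (hy : 0 ≤ y) : lqNorm r x + lqNorm r y ≤ lqNorm r (x + y) := by
  rcases (lqNorm_nonneg (q := r) x).eq_or_lt with hα | hα
  · rw [← hα, zero_add]
    exact lqNorm_mono hr0.le hy (le_add_of_nonneg_left hx)
  rcases (lqNorm_nonneg (q := r) y).eq_or_lt with hβ | hβ
  · rw [← hβ, add_zero]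
    exact lqNorm_mono hr0.le hx (le_add_of_nonneg_right hy)
  have hunit : ∀ z : Fin n → ℝ, 0 < lqNorm r z → lqNorm r ((lqNorm r z)⁻¹ • z) = 1 :=
    fun z hz => by
      rw [lqNorm_smul hr0.ne', abs_inv, abs_of_pos hz, inv_mul_cancel₀ hz.ne']
  set α := lqNorm r x
  set β := lqNorm r y
  have hαβ : 0 < α + β := add_pos hα hβ
  -- `(x + y) / (α + β)` is a convex combination of the unit vectors `x / α` and `y / β`.
  have h := one_le_lqNorm_smul_add_smul hr0 hr1 (smul_nonneg (inv_nonneg.2 hα.le) hx)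
    (smul_nonneg (inv_nonneg.2 hβ.le) hy) (hunit x hα) (hunit y hβ)
    (div_nonneg hα.le hαβ.le) (div_nonneg hβ.le hαβ.le) (by field_simp)
  rw [show (α / (α + β)) • α⁻¹ • x + (β / (α + β)) • β⁻¹ • y =
      (α + β)⁻¹ • (x + y) by
      ext i; simp only [Pi.smul_apply, Pi.add_apply, smul_eq_mul]; field_simp,
    lqNorm_smul hr0.ne', abs_of_pos (inv_pos.2 hαβ)] at h
  rwa [le_inv_mul_iff₀ hαβ, mul_one] at h

theorem lqNorm_sq_add_mul_lqNorm_sq_le (hq₁ : 1 ≤ q) (hq₂ : q ≤ 2) (u v : Fin n → ℝ) :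
    lqNorm q u ^ 2 + (q - 1) * lqNorm q v ^ 2 ≤
      (lqNorm q (u + v) ^ 2 + lqNorm q (u - v) ^ 2) / 2 := by
  set U : Fin n → ℝ := fun i => u i ^ 2
  set V : Fin n → ℝ := (q - 1) • fun i => v i ^ 2
  have hU : 0 ≤ U := fun i => sq_nonneg _
  have hV : 0 ≤ V := fun i => mul_nonneg (by linarith) (sq_nonneg _)
  calc lqNorm q u ^ 2 + (q - 1) * lqNorm q v ^ 2 = lqNorm (q / 2) U + lqNorm (q / 2) V := by
        rw [lqNorm_sq_eq_lqNorm_div_two, lqNorm_sq_eq_lqNorm_div_two,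
          lqNorm_smul (by linarith), abs_of_nonneg (by linarith)]
    _ ≤ lqNorm (q / 2) (U + V) := add_lqNorm_le_lqNorm_add (by linarith) (by linarith) hU hV
    _ ≤ ((∑ i, |(u + v) i| ^ q + ∑ i, |(u - v) i| ^ q) / 2) ^ (2 / q) := by
        rw [lqNorm, one_div_div, ← Finset.sum_add_distrib, Finset.sum_div]
        gcongr with i
        rw [abs_of_nonneg (show 0 ≤ (U + V) i from add_nonneg (hU i) (hV i))]
        exact sq_add_mul_sq_rpow_le hq₁ hq₂ (u i) (v i)
    _ ≤ (lqNorm q (u + v) ^ 2 + lqNorm q (u - v) ^ 2) / 2 := by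
        rw [lqNorm_sq, lqNorm_sq]
        exact add_div_two_rpow_le (by rw [le_div_iff₀ (by linarith)]; linarith)
          (by positivity) (by positivity)

lemma mul_sq_le_one_sub_lqNorm_midpoint (hq₁ : 1 ≤ q) (hq₂ : q ≤ 2) {x y : Fin n → ℝ}
    {t : ℝ} (hx : lqNorm q x ≤ 1) (hy : lqNorm q y ≤ 1) (ht₀ : 0 ≤ t)
    (ht : t ≤ lqNorm q (x - y)) :
    (q - 1) / 8 * t ^ 2 ≤ 1 - lqNorm q ((1 / 2 : ℝ) • (x + y)) := by
  have h := lqNorm_sq_add_mul_lqNorm_sq_le hq₁ hq₂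
    ((1 / 2 : ℝ) • (x + y)) ((1 / 2 : ℝ) • (x - y))
  rw [show (1 / 2 : ℝ) • (x + y) + (1 / 2 : ℝ) • (x - y) = x by module,
    show (1 / 2 : ℝ) • (x + y) - (1 / 2 : ℝ) • (x - y) = y by module,
    lqNorm_smul (by linarith) _ (x - y), abs_of_pos (by norm_num : (0 : ℝ) < 1 / 2)] at h
  set N := lqNorm q ((1 / 2 : ℝ) • (x + y))
  have hx2 : lqNorm q x ^ 2 ≤ 1 := pow_le_one₀ (lqNorm_nonneg x) hx
  have hy2 : lqNorm q y ^ 2 ≤ 1 := pow_le_one₀ (lqNorm_nonneg y) hy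
  have ht2 : t ^ 2 ≤ lqNorm q (x - y) ^ 2 := pow_le_pow_left₀ ht₀ ht 2
  have hN : N ^ 2 ≤ 1 - (q - 1) / 4 * t ^ 2 := by nlinarith
  nlinarith [sq_nonneg (1 - N)]

end LqNorm

/-- Lemma 4.1: for `1 < q ≤ 2`, the modulus of convexity of `ℓ_qⁿ` satisfies
`δ(t) ≥ ((q-1)/8) t²` on `[0, 2]`. -/
theorem lq_modulus_of_convexity_lower_bound
    (q : ℝ) (hq : 1 < q) (hq2 : q ≤ 2) (n : ℕ) (hn : 1 ≤ n)
    (t : ℝ) (ht : t ∈ Set.Icc (0 : ℝ) 2) :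
    lqModulusOfConvexity q n t ≥ (q - 1) / 8 * t ^ 2 := by
  refine le_csInf ?_ ?_
  · set e : Fin n → ℝ := Pi.single ⟨0, hn⟩ 1
    have he : lqNorm q e = 1 := lqNorm_pi_single (by linarith) _
    refine ⟨_, e, -e, he.le, (lqNorm_neg e).trans_le he.le, ?_, rfl⟩
    rw [sub_neg_eq_add, ← two_smul ℝ e, lqNorm_smul (by linarith), he]
    simpa using ht.2
  · rintro _ ⟨x, y, hx, hy, hxy, rfl⟩
    exact mul_sq_le_one_sub_lqNorm_midpoint hq.le hq2 hx hy ht.1 hxy
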